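/- Let A = ⊕_{i≥0} A(i) be a finitely generated commutative graded Hopf algebra over a field k of characteristic zero, with idempotent decomposition A = ⊕_{i=0}^{s} f_i A coming from π₀A (f_i pairwise orthogonal idempotents summing to 1, ε(f₀)=1, ε(f_i)=0 for i≠0). Let R be the coinvariants relative to ϖ: A → A(0) and π_A: A → A/(1−f₀)A the projection onto the identity component. Then π_A restricted to R is injective, i.e., ker π_A ∩ R = 0. -/
import Mathlib


open TensorProduct DirectSum

variable (k A : Type*) [Field k] [CommRing A] [HopfAlgebra k A]
  (𝒜 : ℕ → Submodule k A) [GradedAlgebra 𝒜]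

/-- The projection `ϖ : A → A(0)` (regarded as a map `A → A`) of a graded algebra,
killing all components of positive degree. -/
noncomputable def gradeZeroProjection : A →ₗ[k] A :=
  (𝒜 0).subtype ∘ₗ (DirectSum.component k ℕ (fun i => ↥(𝒜 i)) 0) ∘ₗ
    (DirectSum.decomposeLinearEquiv 𝒜 : A →ₗ[k] ⨁ i, ↥(𝒜 i))

/-- The submodule of right `ϖ`-coinvariants `R = {a ∈ A | (id ⊗ ϖ)Δ(a) = a ⊗ 1}`. -/
noncomputable def coinvariants : Submodule k A :=
  LinearMap.eqLocus
    (TensorProduct.map LinearMap.id (gradeZeroProjection k A 𝒜) ∘ₗ Coalgebra.comul (R := k))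
    ((TensorProduct.mk k A A).flip 1)

lemma gradeZeroProjection_apply (x : A) :
    gradeZeroProjection k A 𝒜 x = (DirectSum.decompose 𝒜 x 0 : A) := rfl

lemma gradeZeroProjection_of_mem {x : A} (hx : x ∈ 𝒜 0) :
    gradeZeroProjection k A 𝒜 x = x := by
  rw [gradeZeroProjection_apply, DirectSum.decompose_of_mem_same 𝒜 hx]

/-- `ϖ` as a `k`-algebra homomorphism. -/
noncomputable def gradeZeroProjectionAlgHom : A →ₐ[k] A :=
  AlgHom.mk' ((GradedRing.projZeroRingHom 𝒜).comp (RingHom.id A)) (by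
    intro c x
    simp only [RingHom.comp_apply, RingHom.id_apply, GradedRing.projZeroRingHom_apply,
      DirectSum.decompose_smul]
    rfl)

lemma gradeZeroProjectionAlgHom_apply (x : A) :
    gradeZeroProjectionAlgHom k A 𝒜 x = gradeZeroProjection k A 𝒜 x := rfl

/-- Let `A = ⊕ A(i)` be a finitely generated commutative graded Hopf
algebra over a field `k` of characteristic zero, with the idempotent decomposition
`A = ⊕_{i=0}^{s} f_i A` coming from `π₀A` (pairwise orthogonal idempotents summing to
`1`, `ε(f₀) = 1`, `ε(f_i) = 0` for `i ≠ 0`, all lying in `A(0)`).  Then the projection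
`π_A : A → A/(1 - f₀)A` onto the identity component is injective on the coinvariants
`R`: `ker π_A ∩ R = 0`. -/
theorem ker_identity_component_projection_inter_coinvariants_eq_zero
    [CharZero k] [Algebra.FiniteType k A]
    (hcomul : ∀ n : ℕ, ∀ x ∈ 𝒜 n,
      Coalgebra.comul (R := k) x ∈
        ⨆ (p : ℕ × ℕ) (_ : p.1 + p.2 = n),
          LinearMap.range (TensorProduct.map (𝒜 p.1).subtype (𝒜 p.2).subtype))
    (hcounit : ∀ n : ℕ, 0 < n → ∀ x ∈ 𝒜 n, Coalgebra.counit (R := k) x = 0)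
    (s : ℕ) (f : Fin (s + 1) → A)
    (hidem : ∀ i, f i * f i = f i)
    (horth : ∀ i j, i ≠ j → f i * f j = 0)
    (hsum : ∑ i, f i = 1)
    (hf0 : Coalgebra.counit (R := k) (f 0) = 1)
    (hfi : ∀ i, i ≠ 0 → Coalgebra.counit (R := k) (f i) = 0)
    (hdeg : ∀ i, f i ∈ 𝒜 0) :
    ∀ a ∈ coinvariants k A 𝒜, a ∈ Ideal.span {1 - f 0} → a = 0 := by
  intro a ha hspan
  -- Step 0: `f 0 * a = 0`.
  obtain ⟨c, hc⟩ := Ideal.mem_span_singleton'.mp hspan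
  have hf0a : f 0 * a = 0 := by
    rw [← hc]
    have : f 0 * (c * (1 - f 0)) = c * (f 0 - f 0 * f 0) := by ring
    rw [this, hidem 0, sub_self, mul_zero]
  -- The algebra map `Ψ = id ⊗ ϖ`.
  set Ψ : A ⊗[k] A →ₐ[k] A ⊗[k] A :=
    Algebra.TensorProduct.map (AlgHom.id k A) (gradeZeroProjectionAlgHom k A 𝒜) with hΨdef
  have hΨ : ∀ u : A ⊗[k] A,
      Ψ u = TensorProduct.map LinearMap.id (gradeZeroProjection k A 𝒜) u := by
    intro u
    induction u using TensorProduct.induction_on with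
    | zero => simp
    | tmul x y =>
        simp [hΨdef, Algebra.TensorProduct.map_tmul, gradeZeroProjectionAlgHom_apply]
    | add u v hu hv => rw [map_add, map_add, hu, hv]
  -- Step 1: `Ψ (comul a) = a ⊗ 1` by coinvariance.
  have ha' : Ψ (Coalgebra.comul (R := k) a) = a ⊗ₜ[k] 1 := by
    rw [hΨ]
    exact ha
  -- Step 2: `comul (f 0)` lies in `A(0) ⊗ A(0)`, hence is fixed by `Ψ`.
  have hmem : Coalgebra.comul (R := k) (f 0) ∈
      LinearMap.range (TensorProduct.map (𝒜 0).subtype (𝒜 0).subtype) := by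
    have hle : (⨆ (p : ℕ × ℕ) (_ : p.1 + p.2 = 0),
        LinearMap.range (TensorProduct.map (𝒜 p.1).subtype (𝒜 p.2).subtype)) ≤
        LinearMap.range (TensorProduct.map (𝒜 0).subtype (𝒜 0).subtype) := by
      refine iSup_le fun p => iSup_le fun hp => ?_
      obtain ⟨p1, p2⟩ := p
      simp only [Nat.add_eq_zero] at hp
      obtain ⟨rfl, rfl⟩ := hp
      exact le_rfl
    exact hle (hcomul 0 (f 0) (hdeg 0))
  have hfix : Ψ (Coalgebra.comul (R := k) (f 0)) = Coalgebra.comul (R := k) (f 0) := by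
    obtain ⟨t, ht⟩ := hmem
    have key : ∀ t : ↥(𝒜 0) ⊗[k] ↥(𝒜 0),
        Ψ (TensorProduct.map (𝒜 0).subtype (𝒜 0).subtype t) =
          TensorProduct.map (𝒜 0).subtype (𝒜 0).subtype t := by
      intro t
      induction t using TensorProduct.induction_on with
      | zero => rw [LinearMap.map_zero]; exact map_zero Ψ
      | tmul x y =>
          obtain ⟨x, hx⟩ := x
          obtain ⟨y, hy⟩ := y
          simp only [TensorProduct.map_tmul, Submodule.coe_subtype, hΨdef,
            Algebra.TensorProduct.map_tmul, AlgHom.coe_id, id_eq,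
            gradeZeroProjectionAlgHom_apply]
          rw [gradeZeroProjection_of_mem k A 𝒜 hy]
      | add u v hu hv => rw [map_add, map_add Ψ, hu, hv]
    rw [← ht]
    exact key t
  -- Step 3: `comul (f 0) * (a ⊗ 1) = 0`.
  have hmul0 : Coalgebra.comul (R := k) (f 0) * (a ⊗ₜ[k] (1 : A)) = 0 := by
    have h0 : Coalgebra.comul (R := k) (f 0) * Coalgebra.comul (R := k) a = 0 := by
      rw [← Bialgebra.comul_mul, hf0a, map_zero]
    calc Coalgebra.comul (R := k) (f 0) * (a ⊗ₜ[k] (1 : A))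
        = Ψ (Coalgebra.comul (R := k) (f 0)) * Ψ (Coalgebra.comul (R := k) a) := by
          rw [hfix, ha']
      _ = Ψ (Coalgebra.comul (R := k) (f 0) * Coalgebra.comul (R := k) a) := (map_mul Ψ _ _).symm
      _ = 0 := by rw [h0, map_zero]
  -- Step 4: apply `m ∘ (id ⊗ antipode)`.
  set L : A ⊗[k] A →ₗ[k] A :=
    LinearMap.mul' k A ∘ₗ LinearMap.lTensor A (HopfAlgebra.antipode (R := k)) with hLdef
  have hL : ∀ u : A ⊗[k] A, L ((a ⊗ₜ[k] (1 : A)) * u) = a * L u := by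
    intro u
    induction u using TensorProduct.induction_on with
    | zero => simp
    | tmul x y =>
        simp only [hLdef, Algebra.TensorProduct.tmul_mul_tmul, one_mul,
          LinearMap.comp_apply, LinearMap.lTensor_tmul, LinearMap.mul'_apply, mul_assoc]
    | add u v hu hv =>
        rw [mul_add, map_add, hu, hv, map_add, mul_add]
  have hLf0 : L (Coalgebra.comul (R := k) (f 0)) = 1 := by
    rw [hLdef, LinearMap.comp_apply, HopfAlgebra.mul_antipode_lTensor_comul_apply, hf0,
      map_one]
  have : a = L ((a ⊗ₜ[k] (1 : A)) * Coalgebra.comul (R := k) (f 0)) := by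
    rw [hL, hLf0, mul_one]
  rw [this, mul_comm, hmul0, map_zero]
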